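/- arXiv:2008.07445 — 5 statements merged into one kernel-verified Lean document; each statement's English description precedes it below -/
import Mathlib

section
/- Let X_1, ..., X_n be Boolean (0/1-valued) random variables on a finite probability space. Suppose there exists δ ∈ [0,1] such that for every subset S ⊆ {1,...,n}, Pr[∀ i ∈ S, X_i = 1] ≤ δ^{|S|}. Then for every γ with δ ≤ γ ≤ 1, Pr[∑ X_i ≥ γn] ≤ e^{-n D(γ‖δ)}, where D(γ‖δ) = γ log(γ/δ) + (1-γ) log((1-γ)/(1-δ)) is the binary relative entropy. -/
open MeasureTheory Real Finset

lemma meas_eq_sum' {Ω : Type*} [Fintype Ω] [MeasurableSpace Ω] [MeasurableSingletonClass Ω]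
    (μ : Measure Ω) [IsProbabilityMeasure μ] (s : Set Ω) [DecidablePred (· ∈ s)] :
    (μ s).toReal = ∑ ω ∈ Finset.univ.filter (· ∈ s), (μ {ω}).toReal := by
  rw [← ENNReal.toReal_sum (fun a _ => measure_ne_top μ _)]
  congr 1
  conv_lhs => rw [show s = ⋃ ω ∈ Finset.univ.filter (· ∈ s), {ω} by ext x; simp]
  rw [measure_biUnion_finset]
  · intro a _ b _ hab
    simp [Set.disjoint_singleton, hab]
  · intro b _; exact measurableSet_singleton b

lemma sum_pow_powerset' {ι : Type*} [DecidableEq ι] (a r : ℝ) (T : Finset ι) (n : ℕ)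
    (hT : T.card ≤ n) :
    ∑ S ∈ T.powerset, a ^ S.card * r ^ (n - S.card)
      = (a + r) ^ T.card * r ^ (n - T.card) := by
  have h1 : (a + r) ^ T.card = ∑ S ∈ T.powerset, a ^ S.card * r ^ (T.card - S.card) := by
    rw [← Finset.prod_const, Finset.prod_add]
    apply Finset.sum_congr rfl
    intro S hS
    rw [Finset.prod_const, Finset.prod_const, Finset.card_sdiff_of_subset (Finset.mem_powerset.mp hS)]
  rw [h1, Finset.sum_mul]
  apply Finset.sum_congr rfl
  intro S hS
  have hS' := Finset.card_le_card (Finset.mem_powerset.mp hS)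
  rw [mul_assoc, ← pow_add]
  congr 2
  omega

theorem impagliazzo_kabanets_entropy
    {Ω : Type*} [Fintype Ω] [MeasurableSpace Ω] [MeasurableSingletonClass Ω]
    (μ : Measure Ω) [IsProbabilityMeasure μ] (n : ℕ)
    (X : Fin n → Ω → ℕ) (hX : ∀ i ω, X i ω = 0 ∨ X i ω = 1)
    (δ : ℝ) (hδ0 : 0 ≤ δ) (hδ1 : δ ≤ 1)
    (h : ∀ S : Finset (Fin n),
      (μ {ω | ∀ i ∈ S, X i ω = 1}).toReal ≤ δ ^ S.card)
    (γ : ℝ) (hγl : δ ≤ γ) (hγu : γ ≤ 1) :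
    (μ {ω | γ * n ≤ ∑ i, (X i ω : ℝ)}).toReal ≤
      Real.exp (-(n : ℝ) *
        (γ * Real.log (γ / δ) + (1 - γ) * Real.log ((1 - γ) / (1 - δ)))) := by
  classical
  have hP1 : (μ {ω | γ * n ≤ ∑ i, (X i ω : ℝ)}).toReal ≤ 1 := by
    have h1 := prob_le_one (μ := μ) (s := {ω | γ * n ≤ ∑ i, (X i ω : ℝ)})
    have := ENNReal.toReal_mono (by simp) h1
    simpa using this
  -- Case δ = 0
  by_cases hδz : δ = 0
  · subst hδz
    refine hP1.trans ?_
    rw [div_zero, Real.log_zero, sub_zero, div_one, mul_zero, zero_add]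
    apply Real.one_le_exp
    have hlog : Real.log (1 - γ) ≤ 0 := Real.log_nonpos (by linarith) (by linarith)
    have h2 : 0 ≤ (n : ℝ) * ((1 - γ) * (-Real.log (1 - γ))) :=
      mul_nonneg (Nat.cast_nonneg n) (mul_nonneg (by linarith) (by linarith))
    have h3 : -(n : ℝ) * ((1 - γ) * Real.log (1 - γ))
        = (n : ℝ) * ((1 - γ) * (-Real.log (1 - γ))) := by ring
    rw [h3]; exact h2
  have hδpos : 0 < δ := lt_of_le_of_ne hδ0 (Ne.symm hδz)
  have hγpos : 0 < γ := lt_of_lt_of_le hδpos hγl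
  -- Case γ = 1
  by_cases hγ1 : γ = 1
  · subst hγ1
    have hsub : {ω | (1:ℝ) * n ≤ ∑ i, (X i ω : ℝ)} ⊆ {ω | ∀ i ∈ (univ : Finset (Fin n)), X i ω = 1} := by
      intro ω hω
      simp only [Set.mem_setOf_eq, one_mul] at hω ⊢
      intro j _
      by_contra hj
      have hXj : X j ω = 0 := (hX j ω).resolve_right hj
      have hle : ∀ i ∈ (univ : Finset (Fin n)) \ {j}, (X i ω : ℝ) ≤ 1 := by
        intro i _
        rcases hX i ω with h0 | h0 <;> simp [h0]
      have hsum : ∑ i, (X i ω : ℝ) = (X j ω : ℝ) + ∑ i ∈ univ \ {j}, (X i ω : ℝ) :=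
        (Finset.add_sum_erase _ _ (mem_univ j)).symm.trans (by rw [Finset.sdiff_singleton_eq_erase])
      have hcard : ((univ : Finset (Fin n)) \ {j}).card = n - 1 := by
        rw [Finset.sdiff_singleton_eq_erase, Finset.card_erase_of_mem (mem_univ j)]
        simp
      have hb : ∑ i ∈ univ \ {j}, (X i ω : ℝ) ≤ (n - 1 : ℕ) := by
        calc ∑ i ∈ univ \ {j}, (X i ω : ℝ) ≤ ∑ i ∈ univ \ {j}, 1 :=
              Finset.sum_le_sum hle
          _ = (n - 1 : ℕ) := by rw [Finset.sum_const, hcard]; simp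
      have hn1 : 1 ≤ n := Nat.one_le_iff_ne_zero.mpr (by rintro rfl; exact j.elim0)
      have : ((n - 1 : ℕ) : ℝ) = (n : ℝ) - 1 := by
        rw [Nat.cast_sub hn1]; simp
      rw [hsum, hXj] at hω
      rw [this] at hb
      push_cast at hω
      linarith
    have hstep : (μ {ω | (1:ℝ) * n ≤ ∑ i, (X i ω : ℝ)}).toReal ≤ δ ^ n := by
      refine le_trans (ENNReal.toReal_mono (measure_ne_top μ _) (measure_mono hsub)) ?_
      have := h (univ : Finset (Fin n))
      simpa using this
    refine hstep.trans (le_of_eq ?_)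
    rw [sub_self, zero_mul, add_zero, one_mul, one_div, Real.log_inv, neg_mul_neg,
      ← Real.log_pow, Real.exp_log (pow_pos hδpos n)]
  -- Main case: 0 < δ ≤ γ < 1
  have hγlt : γ < 1 := lt_of_le_of_ne hγu hγ1
  have hδlt : δ < 1 := lt_of_le_of_lt hγl hγlt
  have hγne : γ ≠ 0 := ne_of_gt hγpos
  have h1δ : (1:ℝ) - δ ≠ 0 := ne_of_gt (by linarith)
  have h1γpos : (0:ℝ) < 1 - γ := by linarith
  have h1δpos : (0:ℝ) < 1 - δ := by linarith
  set q : ℝ := (γ - δ) / (γ * (1 - δ)) with hqdef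
  have hq0 : 0 ≤ q := div_nonneg (by linarith) (by positivity)
  set r : ℝ := 1 - q with hrdef
  have hqr : q + r = 1 := by rw [hrdef]; ring
  have hr : r = δ * (1 - γ) / (γ * (1 - δ)) := by
    rw [hrdef, hqdef]; field_simp; ring
  have hrpos : 0 < r := by rw [hr]; positivity
  have hr1 : r ≤ 1 := by rw [hrdef]; linarith
  have hqδ : q * δ + r = δ / γ := by
    rw [hrdef, hqdef]; field_simp; ring
  set p : Ω → ℝ := fun ω => (μ {ω}).toReal with hpdef
  have hp0 : ∀ ω, 0 ≤ p ω := fun ω => ENNReal.toReal_nonneg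
  set ones : Ω → Finset (Fin n) := fun ω => univ.filter (fun i => X i ω = 1) with honesdef
  have hcardones : ∀ ω, (ones ω).card ≤ n := fun ω =>
    le_trans (Finset.card_filter_le _ _) (by simp)
  have hsumones : ∀ ω, ∑ i, (X i ω : ℝ) = ((ones ω).card : ℝ) := by
    intro ω
    have : ∀ i ∈ (univ : Finset (Fin n)), (X i ω : ℝ) = if X i ω = 1 then (1:ℝ) else 0 := by
      intro i _; rcases hX i ω with h0 | h0 <;> simp [h0]
    rw [Finset.sum_congr rfl this, Finset.sum_boole]
  have hAS : ∀ S : Finset (Fin n), (μ {ω | ∀ i ∈ S, X i ω = 1}).toReal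
      = ∑ ω : Ω, (if S ⊆ ones ω then p ω else 0) := by
    intro S
    rw [meas_eq_sum', Finset.sum_filter]
    apply Finset.sum_congr rfl
    intro ω _
    apply if_congr _ rfl rfl
    simp [honesdef, Finset.subset_iff, Set.mem_setOf_eq]
  have swap : ∑ S : Finset (Fin n), q ^ S.card * r ^ (n - S.card)
        * (μ {ω | ∀ i ∈ S, X i ω = 1}).toReal
      = ∑ ω : Ω, p ω * r ^ (n - (ones ω).card) := by
    simp_rw [hAS, Finset.mul_sum]
    rw [Finset.sum_comm]
    apply Finset.sum_congr rfl
    intro ω _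
    simp_rw [mul_ite, mul_zero]
    rw [← Finset.sum_filter]
    have hfp : (univ : Finset (Finset (Fin n))).filter (· ⊆ ones ω) = (ones ω).powerset := by
      ext S; simp [Finset.mem_powerset]
    rw [hfp, ← Finset.sum_mul, sum_pow_powerset' q r (ones ω) n (hcardones ω), hqr,
      one_pow, one_mul, mul_comm]
  have hsum2 : ∑ S : Finset (Fin n), q ^ S.card * r ^ (n - S.card)
      * (μ {ω | ∀ i ∈ S, X i ω = 1}).toReal ≤ (δ / γ) ^ n := by
    calc ∑ S : Finset (Fin n), q ^ S.card * r ^ (n - S.card)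
          * (μ {ω | ∀ i ∈ S, X i ω = 1}).toReal
        ≤ ∑ S : Finset (Fin n), q ^ S.card * r ^ (n - S.card) * δ ^ S.card := by
          apply Finset.sum_le_sum
          intro S _
          exact mul_le_mul_of_nonneg_left (h S)
            (mul_nonneg (pow_nonneg hq0 _) (pow_nonneg hrpos.le _))
      _ = ∑ S ∈ (univ : Finset (Fin n)).powerset, (q * δ) ^ S.card * r ^ (n - S.card) := by
          rw [Finset.powerset_univ]
          apply Finset.sum_congr rfl
          intro S _
          rw [mul_pow]; ring
      _ = (δ / γ) ^ n := by
          rw [sum_pow_powerset' (q * δ) r univ n (by simp), hqδ]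
          simp
  have key : (μ {ω | γ * n ≤ ∑ i, (X i ω : ℝ)}).toReal * r ^ ((1 - γ) * n)
      ≤ (δ / γ) ^ n := by
    refine le_trans ?_ ((le_of_eq swap.symm).trans hsum2)
    rw [meas_eq_sum' μ _, Finset.sum_mul]
    calc ∑ ω ∈ Finset.univ.filter (· ∈ {ω | γ * n ≤ ∑ i, (X i ω : ℝ)}),
          p ω * r ^ ((1 - γ) * n)
        ≤ ∑ ω ∈ Finset.univ.filter (· ∈ {ω | γ * n ≤ ∑ i, (X i ω : ℝ)}),
          p ω * r ^ (n - (ones ω).card) := Finset.sum_le_sum ?_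
      _ ≤ ∑ ω : Ω, p ω * r ^ (n - (ones ω).card) :=
          Finset.sum_le_sum_of_subset_of_nonneg (Finset.subset_univ _)
            (fun ω _ _ => mul_nonneg (hp0 ω) (pow_nonneg hrpos.le _))
    intro ω hω
    rw [Finset.mem_filter] at hω
    have hk : γ * n ≤ ((ones ω).card : ℝ) := by
      rw [← hsumones ω]; exact hω.2
    refine mul_le_mul_of_nonneg_left ?_ (hp0 ω)
    have hcast : ((n - (ones ω).card : ℕ) : ℝ) = (n : ℝ) - (ones ω).card :=
      Nat.cast_sub (hcardones ω)
    have hexp : ((n - (ones ω).card : ℕ) : ℝ) ≤ (1 - γ) * n := by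
      rw [hcast]; linarith
    have := Real.rpow_le_rpow_of_exponent_ge hrpos hr1 hexp
    rwa [Real.rpow_natCast] at this
  have hrp : (0:ℝ) < r ^ ((1 - γ) * n) := Real.rpow_pos_of_pos hrpos _
  rw [← le_div_iff₀ hrp] at key
  refine key.trans (le_of_eq ?_)
  have hδγ : (0:ℝ) < δ / γ := div_pos hδpos hγpos
  have e1 : (δ / γ) ^ n = Real.exp ((n : ℝ) * Real.log (δ / γ)) := by
    rw [← Real.log_pow, Real.exp_log (pow_pos hδγ n)]
  have e2 : r ^ ((1 - γ) * n) = Real.exp (((1 - γ) * n) * Real.log r) := by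
    rw [Real.rpow_def_of_pos hrpos, mul_comm]
  rw [e1, e2, ← Real.exp_sub]
  congr 1
  rw [Real.log_div (ne_of_gt hδpos) (ne_of_gt hγpos),
    Real.log_div (ne_of_gt hγpos) (ne_of_gt hδpos),
    Real.log_div (ne_of_gt h1γpos) (ne_of_gt h1δpos),
    hr, Real.log_div (ne_of_gt (by positivity : (0:ℝ) < δ * (1 - γ)))
      (ne_of_gt (by positivity : (0:ℝ) < γ * (1 - δ))),
    Real.log_mul (ne_of_gt hδpos) (ne_of_gt h1γpos),
    Real.log_mul (ne_of_gt hγpos) (ne_of_gt h1δpos)]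
  ring
end

section
/- Let X_1, ..., X_n be Boolean random variables such that for every subset S ⊆ {1,...,n}, Pr[∀ i ∈ S, X_i = 1] ≤ δ^{|S|} for some δ ∈ [0,1]. Then for every γ with δ ≤ γ ≤ 1, Pr[∑ X_i ≥ γn] ≤ e^{-2n(γ-δ)²}. -/
/-!
For a weight `r ∈ [0, 1]`, expanding `∏ i, ((1 - r) * X i + r)` over subsets `S` and bounding
each `E[∏ i ∈ S, X i] = P[∀ i ∈ S, X i = 1]` by `δ ^ #S` gives
`E[r ^ #{i | X i = 0}] ≤ ((1 - r) δ + r) ^ n`. On the event `γ n ≤ ∑ i, X i` the integrand is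
at least `r ^ ((1 - γ) n)`, so Markov's inequality bounds its probability. The optimal weight
turns the bound into `exp (-n D(γ ‖ δ))`, and Pinsker's inequality `2 (γ - δ) ^ 2 ≤ D(γ ‖ δ)`
finishes.
-/

open MeasureTheory Real Finset

section Moments

variable {Ω ι : Type*} [Finite Ω] [MeasurableSpace Ω] [MeasurableSingletonClass Ω]
  {μ : Measure Ω} [IsFiniteMeasure μ] [Fintype ι]

theorem integral_prod_mul_add_le (X : ι → Ω → ℝ) {a b δ : ℝ} (ha : 0 ≤ a) (hb : 0 ≤ b)
    (h : ∀ S : Finset ι, ∫ ω, ∏ i ∈ S, X i ω ∂μ ≤ δ ^ #S) :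
    ∫ ω, ∏ i, (a * X i ω + b) ∂μ ≤ (a * δ + b) ^ Fintype.card ι := by
  classical
  calc ∫ ω, ∏ i, (a * X i ω + b) ∂μ
      = ∑ S : Finset ι, a ^ #S * b ^ #Sᶜ * ∫ ω, ∏ i ∈ S, X i ω ∂μ := by
        simp_rw [Fintype.prod_add, prod_mul_distrib, prod_const]
        rw [integral_finsetSum _ fun _ _ => Integrable.of_finite]
        refine Finset.sum_congr rfl fun S _ => ?_
        rw [← integral_const_mul]
        congr 1 with ω
        ring
    _ ≤ ∑ S : Finset ι, a ^ #S * b ^ #Sᶜ * δ ^ #S := by gcongr with S; exact h S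
    _ = (a * δ + b) ^ Fintype.card ι := by
        rw [← Finset.card_univ, ← prod_const, Fintype.prod_add]
        simp_rw [prod_const, mul_pow]
        exact Finset.sum_congr rfl fun S _ => by ring

omit [IsFiniteMeasure μ] in
theorem integral_prod_eq_measureReal {X : ι → Ω → ℕ} (hX : ∀ i ω, X i ω = 0 ∨ X i ω = 1)
    (S : Finset ι) :
    ∫ ω, ∏ i ∈ S, (X i ω : ℝ) ∂μ = μ.real {ω | ∀ i ∈ S, X i ω = 1} := by
  rw [← integral_indicator_one (Set.toFinite _).measurableSet]
  congr 1 with ω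
  simp only [Set.indicator_apply, Set.mem_ofPred_eq, Pi.one_apply]
  split_ifs with hω
  · exact prod_eq_one fun i hi => by simp [hω i hi]
  · push Not at hω
    obtain ⟨i, hi, hne⟩ := hω
    exact prod_eq_zero hi (by simp [(hX i ω).resolve_right hne])

theorem prod_one_sub_mul_add_eq_pow {x : ι → ℕ} (hx : ∀ i, x i = 0 ∨ x i = 1) (r : ℝ) :
    ∏ i, ((1 - r) * x i + r) = r ^ ∑ i, (1 - x i) := by
  rw [← prod_pow_eq_pow_sum]
  refine prod_congr rfl fun i _ => ?_
  rcases hx i with h | h <;> simp [h]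

theorem measureReal_sum_ge_mul_rpow_pow_le {X : ι → Ω → ℕ}
    (hX : ∀ i ω, X i ω = 0 ∨ X i ω = 1) {δ : ℝ}
    (h : ∀ S : Finset ι, μ.real {ω | ∀ i ∈ S, X i ω = 1} ≤ δ ^ #S)
    (γ : ℝ) {r : ℝ} (hr0 : 0 ≤ r) (hr1 : r ≤ 1) :
    μ.real {ω | γ * Fintype.card ι ≤ ∑ i, (X i ω : ℝ)} * (r ^ (1 - γ)) ^ Fintype.card ι ≤
      ((1 - r) * δ + r) ^ Fintype.card ι := by
  have hmoment := integral_prod_mul_add_le (μ := μ) (fun i ω => (X i ω : ℝ)) (sub_nonneg.2 hr1) hr0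
    (fun S => (integral_prod_eq_measureReal hX S).trans_le (h S))
  simp_rw [prod_one_sub_mul_add_eq_pow (hX · _)] at hmoment
  refine le_trans ?_ hmoment
  rw [← rpow_mul_natCast hr0, mul_comm]
  refine le_trans ?_ (mul_meas_ge_le_integral_of_nonneg
    (Filter.Eventually.of_forall fun ω => by positivity) Integrable.of_finite
    (r ^ ((1 - γ) * Fintype.card ι)))
  refine mul_le_mul_of_nonneg_left (measureReal_mono fun ω hω => ?_) (by positivity)
  have hsum : ((∑ i, (1 - X i ω) : ℕ) : ℝ) = Fintype.card ι - ∑ i, (X i ω : ℝ) := by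
    have hle : ∀ i, X i ω ≤ 1 := fun i => by rcases hX i ω with h | h <;> simp [h]
    push_cast [Nat.cast_sub (hle _)]
    simp [sum_sub_distrib]
  rw [Set.mem_ofPred_eq, ← rpow_natCast]
  refine rpow_le_rpow_of_exponent_ge' hr0 hr1 (Nat.cast_nonneg _) ?_
  rw [hsum]
  linarith [hω.out]

end Moments

/-- The relative entropy `D(p ‖ q)` of Bernoulli distributions; meaningful for `0 < q < 1`
(elsewhere `log 0 = 0` gives junk). -/
noncomputable def bernoulliKL (p q : ℝ) : ℝ :=
  p * (log p - log q) + (1 - p) * (log (1 - p) - log (1 - q))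

theorem hasDerivAt_bernoulliKL_right (p : ℝ) {x : ℝ} (hx0 : 0 < x) (hx1 : x < 1) :
    HasDerivAt (bernoulliKL p) ((x - p) / (x * (1 - x))) x := by
  have hx1' : 1 - x ≠ 0 := (sub_pos.2 hx1).ne'
  have hlog := ((hasDerivAt_log hx0.ne').const_sub (log p)).const_mul p
  have hlog' := ((((hasDerivAt_id x).const_sub 1).log hx1').const_sub (log (1 - p))).const_mul
    (1 - p)
  refine (hlog.add hlog').congr_deriv ?_
  simp only [id]
  field_simp
  ring

theorem two_mul_sq_sub_le_bernoulliKL {p q : ℝ} (hq : 0 < q) (hqp : q ≤ p) (hp : p ≤ 1) :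
    2 * (p - q) ^ 2 ≤ bernoulliKL p q := by
  set φ : ℝ → ℝ := fun x => bernoulliKL p x - 2 * (p - x) ^ 2
  have hderiv : ∀ x ∈ Set.Ioo q p,
      HasDerivAt φ ((p - x) * (4 * x * (1 - x) - 1) / (x * (1 - x))) x := by
    intro x hx
    have hx0 : 0 < x := hq.trans hx.1
    have hx1 : 0 < 1 - x := by linarith [hx.2]
    refine ((hasDerivAt_bernoulliKL_right p hx0 (by linarith)).sub
      ((((hasDerivAt_id x).const_sub p).pow 2).const_mul 2)).congr_deriv ?_
    field_simp
    simp only [id]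
    ring
  have hcont : ContinuousOn φ (Set.Icc q p) := by
    have hlog : ContinuousOn log (Set.Icc q p) :=
      continuousOn_log.mono fun x hx => (hq.trans_le hx.1).ne'
    rcases hp.lt_or_eq with hp | rfl
    · have hlog' : ContinuousOn (fun x => log (1 - x)) (Set.Icc q p) :=
        continuousOn_log.comp (by fun_prop) fun x hx => by simp; linarith [hx.2]
      simp only [φ, bernoulliKL]
      fun_prop
    · simp only [φ, bernoulliKL, sub_self, zero_mul, add_zero]
      fun_prop
  have hanti : AntitoneOn φ (Set.Icc q p) := by
    refine antitoneOn_of_deriv_nonpos (convex_Icc q p) hcont ?_ ?_ <;> rw [interior_Icc]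
    · exact fun x hx => (hderiv x hx).differentiableAt.differentiableWithinAt
    · intro x hx
      have hx0 : 0 < x := hq.trans hx.1
      have hx1 : 0 < 1 - x := by linarith [hx.2]
      rw [(hderiv x hx).deriv]
      refine div_nonpos_of_nonpos_of_nonneg (mul_nonpos_of_nonneg_of_nonpos ?_ ?_) (by positivity)
      · linarith [hx.2]
      · nlinarith [sq_nonneg (2 * x - 1)]
  have hφp : φ p = 0 := by simp [φ, bernoulliKL]
  have := hanti (Set.left_mem_Icc.2 hqp) (Set.right_mem_Icc.2 hqp) hqp
  simp only [φ] at this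
  linarith

/-- `r` minimizes `((1 - r) * δ + r) / r ^ (1 - γ)`. -/
theorem one_sub_mul_add_eq_exp_neg_bernoulliKL_mul_rpow {δ γ : ℝ} (hδ0 : 0 < δ) (hδ1 : δ < 1)
    (hγ0 : 0 < γ) (hγ1 : γ < 1) :
    let r := δ / γ * ((1 - γ) / (1 - δ))
    (1 - r) * δ + r = exp (-bernoulliKL γ δ) * r ^ (1 - γ) := by
  intro r
  have h1δ : 0 < 1 - δ := sub_pos.2 hδ1
  have h1γ : 0 < 1 - γ := sub_pos.2 hγ1
  have hr : 0 < r := by positivity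
  have hexp : -bernoulliKL γ δ + log r * (1 - γ) = log (δ / γ) := by
    simp only [r, bernoulliKL]
    rw [log_mul (by positivity) (by positivity), log_div hδ0.ne' hγ0.ne',
      log_div h1γ.ne' h1δ.ne']
    ring
  rw [rpow_def_of_pos hr, ← exp_add, hexp, exp_log (by positivity)]
  simp only [r]
  field_simp
  ring

theorem exists_mul_add_le_exp_mul_rpow {δ γ : ℝ} (hδ : 0 ≤ δ) (hδγ : δ ≤ γ) (hγ : γ ≤ 1) :
    ∃ r : ℝ, 0 ≤ r ∧ r ≤ 1 ∧ 0 < r ^ (1 - γ) ∧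
      (1 - r) * δ + r ≤ exp (-2 * (γ - δ) ^ 2) * r ^ (1 - γ) := by
  rcases hδ.eq_or_lt with rfl | hδ
  · refine ⟨exp (-2 * γ), (exp_pos _).le, exp_le_one_iff.2 (by linarith), by positivity, ?_⟩
    rw [mul_zero, zero_add, ← exp_mul, ← exp_add]
    exact (congrArg exp (by ring)).le
  rcases hγ.eq_or_lt with rfl | hγ
  · refine ⟨0, le_rfl, zero_le_one, by simp, ?_⟩
    have hpinsker := two_mul_sq_sub_le_bernoulliKL hδ hδγ le_rfl
    simp only [bernoulliKL, log_one, sub_self, zero_mul, add_zero, one_mul] at hpinsker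
    simpa using (exp_log hδ).symm.trans_le (exp_le_exp.2 (by linarith))
  have hγ0 : 0 < γ := hδ.trans_le hδγ
  have h1δ : 0 < 1 - δ := by linarith
  have hr : 0 < δ / γ * ((1 - γ) / (1 - δ)) := by
    have : 0 < 1 - γ := by linarith
    positivity
  refine ⟨_, hr.le, ?_, rpow_pos_of_pos hr _, ?_⟩
  · rw [div_mul_div_comm, div_le_one (by positivity)]
    nlinarith
  rw [one_sub_mul_add_eq_exp_neg_bernoulliKL_mul_rpow hδ (by linarith) hγ0 hγ]
  refine mul_le_mul_of_nonneg_right (exp_le_exp.2 ?_) (rpow_pos_of_pos hr _).le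
  linarith [two_mul_sq_sub_le_bernoulliKL hδ hδγ hγ.le]

theorem impagliazzo_kabanets_quadratic_general
    {Ω : Type*} [Fintype Ω] [MeasurableSpace Ω] [MeasurableSingletonClass Ω]
    (μ : Measure Ω) [IsProbabilityMeasure μ] (n : ℕ)
    (X : Fin n → Ω → ℕ) (hX : ∀ i ω, X i ω = 0 ∨ X i ω = 1)
    (δ : ℝ) (hδ0 : 0 ≤ δ)
    (h : ∀ S : Finset (Fin n),
      (μ {ω | ∀ i ∈ S, X i ω = 1}).toReal ≤ δ ^ S.card)
    (γ : ℝ) (hγl : δ ≤ γ) (hγu : γ ≤ 1) :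
    (μ {ω | γ * n ≤ ∑ i, (X i ω : ℝ)}).toReal ≤
      Real.exp (-2 * n * (γ - δ) ^ 2) := by
  obtain ⟨r, hr0, hr1, hc, hr⟩ := exists_mul_add_le_exp_mul_rpow hδ0 hγl hγu
  have htail := measureReal_sum_ge_mul_rpow_pow_le hX h γ hr0 hr1 (μ := μ)
  rw [Fintype.card_fin] at htail
  have hpow : ((1 - r) * δ + r) ^ n ≤ exp (-2 * n * (γ - δ) ^ 2) * (r ^ (1 - γ)) ^ n :=
    calc ((1 - r) * δ + r) ^ n ≤ (exp (-2 * (γ - δ) ^ 2) * r ^ (1 - γ)) ^ n :=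
          pow_le_pow_left₀ (by positivity) hr n
      _ = exp (-2 * n * (γ - δ) ^ 2) * (r ^ (1 - γ)) ^ n := by
          rw [mul_pow, ← exp_nat_mul]
          ring_nf
  exact le_of_mul_le_mul_right (htail.trans hpow) (pow_pos hc n)

theorem impagliazzo_kabanets_quadratic
    {Ω : Type*} [Fintype Ω] [MeasurableSpace Ω] [MeasurableSingletonClass Ω]
    (μ : Measure Ω) [IsProbabilityMeasure μ] (n : ℕ)
    (X : Fin n → Ω → ℕ) (hX : ∀ i ω, X i ω = 0 ∨ X i ω = 1)
    (δ : ℝ) (hδ0 : 0 ≤ δ) (hδ1 : δ ≤ 1)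
    (h : ∀ S : Finset (Fin n),
      (μ {ω | ∀ i ∈ S, X i ω = 1}).toReal ≤ δ ^ S.card)
    (γ : ℝ) (hγl : δ ≤ γ) (hγu : γ ≤ 1) :
    (μ {ω | γ * n ≤ ∑ i, (X i ω : ℝ)}).toReal ≤
      Real.exp (-2 * n * (γ - δ) ^ 2) :=
  impagliazzo_kabanets_quadratic_general μ n X hX δ hδ0 h γ hγl hγu
end

section
/- Let X_1, ..., X_n be Boolean random variables such that for every subset S ⊆ {1,...,n}, Pr[∀ i ∈ S, X_i = 1] ≤ p^{|S|} for some p ∈ [0,1]. Let δ > 0 and suppose k is a natural number with k ≥ n(p + δ). Then Pr[∑ X_i ≥ k] ≤ e^{-2nδ²}. -/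
/-!
Exponential moment method. For `{0,1}`-valued `x`, `exp (t * x) = 1 + (exp t - 1) * x`, so
expanding the product `exp (t * ∑ X i) = ∏ (1 + (exp t - 1) * X i)` over subsets writes the
moment generating function of `∑ X i` as `∑_S (exp t - 1) ^ |S| * P[X i = 1 for all i ∈ S]`.
The hypothesis bounds this by `(1 - p + p * exp t) ^ n`, which is exactly the moment generating
function of a sum of `n` independent Bernoulli(`p`) variables; Markov's inequality and Hoeffding's
lemma `1 - p + p * exp t ≤ exp (p * t + t ^ 2 / 8)` at `t = 4δ` then give the Chernoff bound.
-/

open MeasureTheory Real ProbabilityTheory Finset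

lemma one_sub_add_mul_exp_le_exp {p : ℝ} (hp0 : 0 ≤ p) (hp1 : p ≤ 1) (t : ℝ) :
    1 - p + p * exp t ≤ exp (p * t + t ^ 2 / 8) := by
  set ν : Measure ℝ := Ber((1 : ℝ), 0, ⟨p, hp0, hp1⟩)
  have h01 : ∀ᵐ x ∂ν, x ∈ Set.Icc (0 : ℝ) 1 := by
    rw [ae_iff]
    exact bernoulliMeasure_apply_of_notMem_of_notMem _ measurableSet_Icc.compl
      (by simp) (by simp)
  have hoeffding := (hasSubgaussianMGF_of_mem_Icc aemeasurable_id h01).mgf_le t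
  norm_num [mgf, ν, integral_bernoulliMeasure] at hoeffding
  calc 1 - p + p * exp t
      = exp (p * t) * (p * exp (t * (1 - p)) + (1 - p) * exp (-(t * p))) := by
        rw [mul_add, mul_left_comm, mul_left_comm (exp _), ← exp_add, ← exp_add]
        rw [show p * t + t * (1 - p) = t by ring, show p * t + -(t * p) = 0 by ring, exp_zero]
        ring
    _ ≤ exp (p * t) * exp (1 / 4 * t ^ 2 / 2) := by gcongr
    _ = exp (p * t + t ^ 2 / 8) := by rw [← exp_add]; ring_nf

section SubsetMoments

variable {ι Ω : Type*} {X : ι → Ω → ℕ}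

lemma exp_mul_sum_eq_sum_indicator [Fintype ι] (hX01 : ∀ i ω, X i ω = 0 ∨ X i ω = 1)
    (t : ℝ) (ω : Ω) :
    exp (t * ∑ i, (X i ω : ℝ)) =
      ∑ S ∈ univ.powerset, (exp t - 1) ^ #S * {ω | ∀ i ∈ S, X i ω = 1}.indicator 1 ω := by
  classical
  have hexp (i : ι) : exp (t * X i ω) = (exp t - 1) * (if X i ω = 1 then 1 else 0) + 1 := by
    rcases hX01 i ω with h | h <;> simp [h]
  rw [mul_sum, exp_sum, prod_congr rfl fun i _ ↦ hexp i, prod_add]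
  refine sum_congr rfl fun S _ ↦ ?_
  rw [prod_const_one, mul_one, prod_mul_distrib, prod_const, prod_boole]
  simp [Set.indicator_apply]

variable [MeasurableSpace Ω] {μ : Measure Ω}

lemma measurableSet_forall_eq_one (hX : ∀ i, Measurable (X i)) (S : Finset ι) :
    MeasurableSet {ω | ∀ i ∈ S, X i ω = 1} := by
  simp only [Set.ofPred_forall]
  exact S.measurableSet_biInter fun i _ ↦ hX i (measurableSet_singleton 1)

variable [Fintype ι] [IsFiniteMeasure μ] (hX : ∀ i, Measurable (X i))
  (hX01 : ∀ i ω, X i ω = 0 ∨ X i ω = 1)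
include hX hX01

lemma integrable_exp_mul_sum (t : ℝ) : Integrable (fun ω ↦ exp (t * ∑ i, (X i ω : ℝ))) μ := by
  simp only [exp_mul_sum_eq_sum_indicator hX01]
  exact integrable_finsetSum _ fun S _ ↦
    ((integrable_const 1).indicator (measurableSet_forall_eq_one hX S)).const_mul _

lemma mgf_sum_eq_sum_powerset (t : ℝ) :
    mgf (fun ω ↦ ∑ i, (X i ω : ℝ)) μ t =
      ∑ S ∈ univ.powerset, (exp t - 1) ^ #S * μ.real {ω | ∀ i ∈ S, X i ω = 1} := by
  simp only [mgf, exp_mul_sum_eq_sum_indicator hX01]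
  rw [integral_finsetSum _ fun S _ ↦
    ((integrable_const 1).indicator (measurableSet_forall_eq_one hX S)).const_mul _]
  refine sum_congr rfl fun S _ ↦ ?_
  rw [integral_const_mul, integral_indicator_one (measurableSet_forall_eq_one hX S)]

variable {p : ℝ} (h : ∀ S : Finset ι, μ.real {ω | ∀ i ∈ S, X i ω = 1} ≤ p ^ #S)
  {t : ℝ} (ht : 0 ≤ t)
include h ht

lemma mgf_sum_le_pow :
    mgf (fun ω ↦ ∑ i, (X i ω : ℝ)) μ t ≤ (1 - p + p * exp t) ^ Fintype.card ι := by
  have hc : 0 ≤ exp t - 1 := by linarith [one_le_exp ht]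
  calc mgf (fun ω ↦ ∑ i, (X i ω : ℝ)) μ t
      = ∑ S ∈ univ.powerset, (exp t - 1) ^ #S * μ.real {ω | ∀ i ∈ S, X i ω = 1} :=
        mgf_sum_eq_sum_powerset hX hX01 t
    _ ≤ ∑ S ∈ univ.powerset, ((exp t - 1) * p) ^ #S * 1 ^ (#univ - #S) := by
        refine sum_le_sum fun S _ ↦ ?_
        rw [one_pow, mul_one, mul_pow]
        exact mul_le_mul_of_nonneg_left (h S) (pow_nonneg hc _)
    _ = (1 - p + p * exp t) ^ Fintype.card ι := by
        rw [sum_pow_mul_eq_add_pow, card_univ]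
        ring

lemma measureReal_sum_ge_le (a : ℝ) :
    μ.real {ω | a ≤ ∑ i, (X i ω : ℝ)} ≤ exp (-t * a) * (1 - p + p * exp t) ^ Fintype.card ι :=
  (measure_ge_le_exp_mul_mgf a ht (integrable_exp_mul_sum hX hX01 t)).trans <|
    mul_le_mul_of_nonneg_left (mgf_sum_le_pow hX hX01 h ht) (exp_pos _).le

end SubsetMoments

theorem threshold_bound
    {Ω : Type*} [Fintype Ω] [MeasurableSpace Ω] [MeasurableSingletonClass Ω]
    (μ : Measure Ω) [IsProbabilityMeasure μ] (n : ℕ)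
    (X : Fin n → Ω → ℕ) (hX : ∀ i ω, X i ω = 0 ∨ X i ω = 1)
    (p : ℝ) (hp0 : 0 ≤ p) (hp1 : p ≤ 1)
    (h : ∀ S : Finset (Fin n),
      (μ {ω | ∀ i ∈ S, X i ω = 1}).toReal ≤ p ^ S.card)
    (δ : ℝ) (hδ : 0 < δ) (k : ℕ) (hk : (n : ℝ) * (p + δ) ≤ k) :
    (μ {ω | k ≤ ∑ i, X i ω}).toReal ≤ Real.exp (-2 * n * δ ^ 2) := by
  have hevent : {ω | k ≤ ∑ i, X i ω} = {ω | (k : ℝ) ≤ ∑ i, (X i ω : ℝ)} := by norm_cast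
  have ht : 0 ≤ 4 * δ := by positivity
  calc (μ {ω | k ≤ ∑ i, X i ω}).toReal
      ≤ exp (-(4 * δ) * k) * (1 - p + p * exp (4 * δ)) ^ n := by
        have tail := measureReal_sum_ge_le (fun i ↦ .of_discrete) hX h ht k
        rwa [Fintype.card_fin, ← hevent] at tail
    _ ≤ exp (-(4 * δ) * k) * exp (p * (4 * δ) + (4 * δ) ^ 2 / 8) ^ n := by
        gcongr
        exact one_sub_add_mul_exp_le_exp hp0 hp1 _
    _ ≤ exp (-2 * n * δ ^ 2) := by
        rw [← exp_nat_mul, ← exp_add, exp_le_exp]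
        linarith [mul_le_mul_of_nonneg_left hk ht]
end

section
/- Let X_1, ..., X_n be Boolean random variables with Pr[∀ i ∈ S, X_i = 1] ≤ δ^{|S|} for all S ⊆ {1,...,n}, where 0 ≤ δ < 1. Then for any fixed γ ∈ (δ, 1], Pr[∑ X_i ≥ γn] → 0 as n → ∞ (more precisely, the bound e^{-2n(γ-δ)²} tends to 0). -/
open MeasureTheory Real Filter

lemma meas_toReal_sum {Ω : Type*} [Fintype Ω] [MeasurableSpace Ω] [MeasurableSingletonClass Ω]
    (μ : Measure Ω) [IsFiniteMeasure μ] (E : Set Ω) [DecidablePred (· ∈ E)] :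
    (μ E).toReal = ∑ ω ∈ Finset.univ.filter (· ∈ E), (μ {ω}).toReal := by
  have h1 : μ E = ∑ ω ∈ Finset.univ.filter (· ∈ E), μ {ω} := by
    rw [← measure_biUnion_finset ?_ (fun _ _ => measurableSet_singleton _)]
    · congr 1; ext x; simp
    · intro x hx y hy hxy
      simp [Function.onFun, Set.disjoint_singleton, hxy]
  rw [h1, ENNReal.toReal_sum (fun a _ => measure_ne_top μ _)]

lemma key_bound {n : ℕ} {Ω : Type*} [Fintype Ω] [MeasurableSpace Ω] [MeasurableSingletonClass Ω]
    (μ : Measure Ω) [IsProbabilityMeasure μ] (X : Fin n → Ω → ℕ)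
    (hX : ∀ i ω, X i ω = 0 ∨ X i ω = 1)
    (δ γ q : ℝ) (hδ0 : 0 ≤ δ) (hγu : γ ≤ 1) (hq0 : 0 < q) (hq1 : q < 1)
    (h : ∀ S : Finset (Fin n), (μ {ω | ∀ i ∈ S, X i ω = 1}).toReal ≤ δ ^ S.card) :
    (μ {ω | γ * n ≤ ∑ i, (X i ω : ℝ)}).toReal * (1-q) ^ ((1-γ)*n) ≤ (q*δ + (1-q)) ^ n := by
  classical
  set s : ℝ := 1 - q with hs
  have hs0 : 0 < s := by simp [hs]; linarith
  have hs1 : s ≤ 1 := by simp [hs]; linarith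
  set T : Ω → Finset (Fin n) := fun ω => Finset.univ.filter (fun i => X i ω = 1) with hT
  set P : Ω → ℝ := fun ω => (μ {ω}).toReal with hP
  have hPnn : ∀ ω, 0 ≤ P ω := fun ω => ENNReal.toReal_nonneg
  set A : Set Ω := {ω | γ * n ≤ ∑ i, (X i ω : ℝ)} with hA
  -- on A, γ n ≤ card T ω
  have hsum_card : ∀ ω, ∑ i, (X i ω : ℝ) = (T ω).card := by
    intro ω
    have : ∀ i, ((X i ω : ℝ)) = if X i ω = 1 then (1:ℝ) else 0 := by
      intro i; rcases hX i ω with h' | h' <;> simp [h']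
    rw [Finset.sum_congr rfl (fun i _ => this i)]
    simp [hT, Finset.sum_boole]
  have hcard_le : ∀ ω, (T ω).card ≤ n := by
    intro ω
    simpa using Finset.card_filter_le Finset.univ (fun i => X i ω = 1)
  -- per-ω estimate on A
  have hponw : ∀ ω ∈ A, s ^ ((1-γ)*n) ≤ s ^ (n - (T ω).card) := by
    intro ω hω
    have h1 : γ * n ≤ ((T ω).card : ℝ) := by rw [← hsum_card]; exact hω
    have h2 : ((n - (T ω).card : ℕ) : ℝ) = (n : ℝ) - (T ω).card := by
      rw [Nat.cast_sub (hcard_le ω)]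
    calc s ^ ((1-γ)*n) ≤ s ^ (((n - (T ω).card : ℕ) : ℝ)) := by
          apply Real.rpow_le_rpow_of_exponent_ge hs0 hs1
          rw [h2]; nlinarith
      _ = s ^ (n - (T ω).card) := by rw [Real.rpow_natCast]
  -- set identity
  have hset : ∀ S : Finset (Fin n), {ω | ∀ i ∈ S, X i ω = 1} = {ω | S ⊆ T ω} := by
    intro S; ext ω; simp [hT, Finset.subset_iff]
  -- inner sum identity
  have hinner : ∀ ω, ∑ S ∈ (T ω).powerset, q ^ S.card * s ^ (n - S.card)
      = s ^ (n - (T ω).card) := by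
    intro ω
    set t := T ω
    have hone : ∑ S ∈ t.powerset, q ^ S.card * s ^ (t.card - S.card) = 1 := by
      have := Finset.prod_add (fun _ : Fin n => q) (fun _ : Fin n => s) t
      simp only [Finset.prod_const] at this
      have h2 : ∀ S ∈ t.powerset, q ^ S.card * s ^ ((t \ S).card)
          = q ^ S.card * s ^ (t.card - S.card) := by
        intro S hS
        rw [Finset.card_sdiff_of_subset (Finset.mem_powerset.mp hS)]
      rw [Finset.sum_congr rfl h2] at this
      have : (q + s) ^ t.card = ∑ S ∈ t.powerset, q ^ S.card * s ^ (t.card - S.card) := this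
      rw [← this]
      simp [hs]
    calc ∑ S ∈ t.powerset, q ^ S.card * s ^ (n - S.card)
        = ∑ S ∈ t.powerset, (q ^ S.card * s ^ (t.card - S.card)) * s ^ (n - t.card) := by
          apply Finset.sum_congr rfl
          intro S hS
          have h1 : S.card ≤ t.card := Finset.card_le_card (Finset.mem_powerset.mp hS)
          have h2 : n - S.card = (t.card - S.card) + (n - t.card) := by
            have h3 : t.card ≤ n := hcard_le ω; omega
          rw [h2, pow_add]; ring
      _ = s ^ (n - t.card) := by rw [← Finset.sum_mul, hone, one_mul]
  -- the chain
  calc (μ A).toReal * s ^ ((1-γ)*n)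
      = ∑ ω ∈ Finset.univ.filter (· ∈ A), P ω * s ^ ((1-γ)*n) := by
        rw [meas_toReal_sum, Finset.sum_mul]
    _ ≤ ∑ ω ∈ Finset.univ.filter (· ∈ A), P ω * s ^ (n - (T ω).card) := by
        apply Finset.sum_le_sum
        intro ω hω
        exact mul_le_mul_of_nonneg_left (hponw ω (by simpa using hω)) (hPnn ω)
    _ ≤ ∑ ω, P ω * s ^ (n - (T ω).card) := by
        apply Finset.sum_le_sum_of_subset_of_nonneg (Finset.filter_subset _ _)
        intro ω _ _
        positivity
    _ = ∑ ω, ∑ S ∈ (T ω).powerset, P ω * (q ^ S.card * s ^ (n - S.card)) := by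
        apply Finset.sum_congr rfl
        intro ω _
        rw [← Finset.mul_sum, hinner]
    _ = ∑ ω : Ω, ∑ S : Finset (Fin n),
          (if S ⊆ T ω then q ^ S.card * s ^ (n - S.card) * P ω else 0) := by
        apply Finset.sum_congr rfl
        intro ω _
        have hpow : (T ω).powerset = Finset.univ.filter (· ⊆ T ω) := by ext S; simp
        rw [hpow, Finset.sum_filter]
        apply Finset.sum_congr rfl
        intro S _
        split <;> ring
    _ = ∑ S : Finset (Fin n), ∑ ω : Ω,
          (if S ⊆ T ω then q ^ S.card * s ^ (n - S.card) * P ω else 0) := Finset.sum_comm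
    _ = ∑ S : Finset (Fin n), q ^ S.card * s ^ (n - S.card) * (μ {ω | ∀ i ∈ S, X i ω = 1}).toReal := by
        apply Finset.sum_congr rfl
        intro S _
        rw [hset S, meas_toReal_sum, Finset.mul_sum, ← Finset.sum_filter]
        apply Finset.sum_congr ?_ (fun _ _ => rfl)
        ext ω
        simp [Set.mem_setOf_eq]
    _ ≤ ∑ S : Finset (Fin n), q ^ S.card * s ^ (n - S.card) * δ ^ S.card := by
        apply Finset.sum_le_sum
        intro S _
        exact mul_le_mul_of_nonneg_left (h S) (by positivity)
    _ = (q*δ + s) ^ n := by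
        have h2 := Fintype.prod_add (fun _ : Fin n => q * δ) (fun _ : Fin n => s)
        simp only [Finset.prod_const, Finset.card_univ, Fintype.card_fin] at h2
        rw [h2]
        apply Finset.sum_congr rfl
        intro S _
        rw [Finset.card_compl, Fintype.card_fin, mul_pow]
        ring
theorem threshold_probability_vanishes
    (δ : ℝ) (hδ0 : 0 ≤ δ) (hδ1 : δ < 1) (γ : ℝ) (hγl : δ < γ) (hγu : γ ≤ 1)
    (Ω : ℕ → Type*) [∀ n, Fintype (Ω n)] [∀ n, MeasurableSpace (Ω n)]
    [∀ n, MeasurableSingletonClass (Ω n)]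
    (μ : ∀ n, Measure (Ω n)) [∀ n, IsProbabilityMeasure (μ n)]
    (X : ∀ n, Fin n → Ω n → ℕ) (hX : ∀ n i ω, X n i ω = 0 ∨ X n i ω = 1)
    (h : ∀ n, ∀ S : Finset (Fin n),
      ((μ n) {ω | ∀ i ∈ S, X n i ω = 1}).toReal ≤ δ ^ S.card) :
    Tendsto (fun n => ((μ n) {ω | γ * n ≤ ∑ i, (X n i ω : ℝ)}).toReal)
      atTop (nhds 0) ∧
    Tendsto (fun n : ℕ => Real.exp (-2 * n * (γ - δ) ^ 2)) atTop (nhds 0) := by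
  classical
  have hγδ : 0 < γ - δ := sub_pos.mpr hγl
  constructor
  · -- main part
    set q : ℝ := min (1/2) ((γ - δ)/(2*(1-γ)+1)) with hqdef
    have hD : 0 < 2*(1-γ)+1 := by linarith
    have hq0 : 0 < q := lt_min (by norm_num) (div_pos hγδ hD)
    have hq2 : q ≤ 1/2 := min_le_left _ _
    have hqle : q ≤ (γ-δ)/(2*(1-γ)+1) := min_le_right _ _
    have hqD : q * (2*(1-γ)+1) ≤ γ - δ := (le_div_iff₀ hD).mp hqle
    have hmain : 2*(1-γ)*q < γ - δ := by nlinarith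
    set s : ℝ := 1 - q with hsdef
    have hs0 : 0 < s := by rw [hsdef]; linarith
    have hs1 : s ≤ 1 := by rw [hsdef]; linarith
    set r : ℝ := q*δ + (1-q) with hrdef
    have hlog : -(q + 2*q^2) ≤ Real.log s := by
      have h1 : Real.log s⁻¹ ≤ s⁻¹ - 1 := Real.log_le_sub_one_of_pos (inv_pos.mpr hs0)
      rw [Real.log_inv] at h1
      have h2 : s⁻¹ ≤ 1 + q + 2*q^2 := by
        have h3 : (1:ℝ) ≤ (1 + q + 2*q^2) * s := by rw [hsdef]; nlinarith
        have := (div_le_iff₀ hs0).mpr h3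
        simpa [one_div] using this
      linarith
    have hkey : r < s ^ (1-γ) := by
      have h1 : -((1-γ)*(q+2*q^2)) ≤ (1-γ) * Real.log s := by
        have := mul_le_mul_of_nonneg_left hlog (show (0:ℝ) ≤ 1-γ by linarith)
        nlinarith [this]
      have h2 : 1 + (1-γ)*Real.log s ≤ s ^ (1-γ) := by
        rw [Real.rpow_def_of_pos hs0]
        nlinarith [Real.add_one_le_exp (Real.log s * (1-γ))]
      have h4 : (1-γ) + 2*(1-γ)*q < 1-δ := by linarith
      have h5 := mul_lt_mul_of_pos_right h4 hq0
      have h3 : r < 1 - (1-γ)*(q+2*q^2) := by rw [hrdef]; nlinarith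
      linarith
    have hr0 : 0 < r := by rw [hrdef]; nlinarith
    set c : ℝ := r / s ^ (1-γ) with hcdef
    have hsp : (0:ℝ) < s ^ (1-γ) := Real.rpow_pos_of_pos hs0 _
    have hc0 : 0 ≤ c := le_of_lt (div_pos hr0 hsp)
    have hc1 : c < 1 := (div_lt_one hsp).mpr hkey
    have hb : ∀ n : ℕ, ((μ n) {ω | γ * n ≤ ∑ i, (X n i ω : ℝ)}).toReal ≤ c ^ n := by
      intro n
      have hk := key_bound (μ n) (X n) (hX n) δ γ q hδ0 hγu hq0 (by linarith) (h n)
      have heq : c ^ n = r ^ n / s ^ ((1-γ)*(n:ℝ)) := by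
        rw [hcdef, div_pow, ← Real.rpow_natCast (s ^ (1-γ)) n, ← Real.rpow_mul (le_of_lt hs0)]
      rw [heq]
      rw [le_div_iff₀ (Real.rpow_pos_of_pos hs0 _)]
      exact hk
    exact squeeze_zero (fun n => ENNReal.toReal_nonneg) hb
      (tendsto_pow_atTop_nhds_zero_of_lt_one hc0 hc1)
  · have h2 : Tendsto (fun n : ℕ => (Real.exp (-2*(γ-δ)^2))^n) atTop (nhds 0) := by
      apply tendsto_pow_atTop_nhds_zero_of_lt_one (Real.exp_pos _).le
      rw [← Real.exp_zero]
      exact Real.exp_lt_exp.mpr (by nlinarith)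
    apply h2.congr
    intro n
    rw [← Real.exp_nat_mul]
    congr 1
    ring
end

section
/- Let X_1, ..., X_n be Boolean random variables with Pr[∀ i ∈ S, X_i = 1] ≤ δ^{|S|} for all S, and let k, m be naturals with m ≤ k ≤ n. Then Pr[∑ X_i ≥ k] ≤ C(n,m)·δ^m / C(k,m). -/
open MeasureTheory Real Finset

lemma meas_finset_toReal {Ω : Type*} [Fintype Ω] [MeasurableSpace Ω]
    [MeasurableSingletonClass Ω]
    (μ : Measure Ω) [IsFiniteMeasure μ] (t : Finset Ω) :
    (μ ↑t).toReal = ∑ ω ∈ t, (μ {ω}).toReal := by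
  rw [show (↑t : Set Ω) = ⋃ x ∈ t, {x} by ext x; simp]
  rw [measure_biUnion_finset ?_ (fun x _ => measurableSet_singleton x)]
  · exact ENNReal.toReal_sum (fun x _ => measure_ne_top μ _)
  · intro x _ y _ hxy
    simp [Function.onFun, Set.disjoint_singleton, hxy]

theorem markov_binomial_bound
    {Ω : Type*} [Fintype Ω] [MeasurableSpace Ω] [MeasurableSingletonClass Ω]
    (μ : Measure Ω) [IsProbabilityMeasure μ] (n : ℕ)
    (X : Fin n → Ω → ℕ) (hX : ∀ i ω, X i ω = 0 ∨ X i ω = 1)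
    (δ : ℝ) (hδ0 : 0 ≤ δ) (hδ1 : δ ≤ 1)
    (h : ∀ S : Finset (Fin n),
      (μ {ω | ∀ i ∈ S, X i ω = 1}).toReal ≤ δ ^ S.card)
    (k m : ℕ) (hmk : m ≤ k) (hkn : k ≤ n) :
    (μ {ω | k ≤ ∑ i, X i ω}).toReal ≤
      (n.choose m : ℝ) * δ ^ m / (k.choose m : ℝ) := by
  classical
  set p : Ω → ℝ := fun ω => (μ {ω}).toReal with hp
  have hp0 : ∀ ω, 0 ≤ p ω := fun ω => ENNReal.toReal_nonneg
  set T : Ω → Finset (Fin n) := fun ω => univ.filter (fun i => X i ω = 1) with hT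
  have hsum : ∀ ω, ∑ i, X i ω = (T ω).card := by
    intro ω
    rw [hT, Finset.card_filter]
    refine Finset.sum_congr rfl fun i _ => ?_
    rcases hX i ω with h0 | h0 <;> simp [h0]
  have hkm_pos : (0:ℝ) < (k.choose m : ℝ) := by
    exact_mod_cast Nat.choose_pos hmk
  set B : Finset Ω := univ.filter (fun ω => k ≤ ∑ i, X i ω) with hB
  have hBset : {ω | k ≤ ∑ i, X i ω} = (↑B : Set Ω) := by
    ext ω; simp [hB]
  rw [hBset, meas_finset_toReal, le_div_iff₀ hkm_pos]
  calc (∑ ω ∈ B, p ω) * (k.choose m : ℝ)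
      = ∑ ω ∈ B, p ω * (k.choose m : ℝ) := by rw [Finset.sum_mul]
    _ ≤ ∑ ω ∈ B, p ω * ((T ω).card.choose m : ℝ) := by
        refine Finset.sum_le_sum fun ω hω => ?_
        have hk : k ≤ (T ω).card := by
          have := (Finset.mem_filter.mp hω).2
          rwa [hsum ω] at this
        have : (k.choose m : ℝ) ≤ ((T ω).card.choose m : ℝ) := by
          exact_mod_cast Nat.choose_le_choose m hk
        exact mul_le_mul_of_nonneg_left this (hp0 ω)
    _ = ∑ ω ∈ B, ∑ S ∈ Finset.powersetCard m (T ω), p ω := by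
        refine Finset.sum_congr rfl fun ω _ => ?_
        rw [Finset.sum_const, Finset.card_powersetCard, nsmul_eq_mul, mul_comm]
    _ = ∑ ω ∈ B, ∑ S ∈ Finset.powersetCard m (univ : Finset (Fin n)),
          (if S ⊆ T ω then p ω else 0) := by
        refine Finset.sum_congr rfl fun ω _ => ?_
        rw [← Finset.sum_filter]
        refine Finset.sum_congr ?_ (fun _ _ => rfl)
        ext S
        simp [Finset.mem_powersetCard, and_comm]
    _ = ∑ S ∈ Finset.powersetCard m (univ : Finset (Fin n)),
          ∑ ω ∈ B, (if S ⊆ T ω then p ω else 0) := Finset.sum_comm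
    _ ≤ ∑ S ∈ Finset.powersetCard m (univ : Finset (Fin n)), δ ^ m := by
        refine Finset.sum_le_sum fun S hS => ?_
        have hScard : S.card = m := (Finset.mem_powersetCard.mp hS).2
        have h1 : ∑ ω ∈ B, (if S ⊆ T ω then p ω else 0)
            ≤ ∑ ω ∈ univ.filter (fun ω => ∀ i ∈ S, X i ω = 1), p ω := by
          rw [← Finset.sum_filter]
          refine Finset.sum_le_sum_of_subset_of_nonneg ?_ (fun ω _ _ => hp0 ω)
          intro ω hω
          have := Finset.mem_filter.mp hω
          simp only [Finset.mem_filter, Finset.mem_univ, true_and]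
          intro i hi
          have := this.2 hi
          simpa [hT] using this
        have h2 : (μ {ω | ∀ i ∈ S, X i ω = 1}).toReal
            = ∑ ω ∈ univ.filter (fun ω => ∀ i ∈ S, X i ω = 1), p ω := by
          rw [show {ω | ∀ i ∈ S, X i ω = 1}
              = (↑(univ.filter (fun ω => ∀ i ∈ S, X i ω = 1)) : Set Ω) by
            ext ω; simp]
          exact meas_finset_toReal μ _
        calc ∑ ω ∈ B, (if S ⊆ T ω then p ω else 0)
            ≤ ∑ ω ∈ univ.filter (fun ω => ∀ i ∈ S, X i ω = 1), p ω := h1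
          _ = (μ {ω | ∀ i ∈ S, X i ω = 1}).toReal := h2.symm
          _ ≤ δ ^ S.card := h S
          _ = δ ^ m := by rw [hScard]
    _ = (n.choose m : ℝ) * δ ^ m := by
        rw [Finset.sum_const, Finset.card_powersetCard, Finset.card_univ,
          Fintype.card_fin, nsmul_eq_mul]
end
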